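/- The simplicial complex Δ(I) is vertex decomposable. -/

import Mathlib

open MvPolynomial

noncomputable section

/-- The vertex set / variable set `𝒮` of the polarized ring `S^℘`: pairs `⟨i, j⟩` with
`1 ≤ i ≤ n`, `1 ≤ j ≤ b i`.  Here `j : Fin (b i)` encodes the paper's second index `j + 1`,
so the vertex `⟨i, j⟩` stands for the variable `x_{i, j+1}` of the paper. -/
abbrev PolVars (m : ℕ) (b : Fin m → ℕ) := Σ i : Fin m, Fin (b i)

/-- `I` is a monomial ideal, i.e. generated by monomials. -/
def IsMonomialIdeal {K : Type} [Field K] {m : ℕ} (I : Ideal (MvPolynomial (Fin m) K)) : Prop :=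
  ∃ A : Set (Fin m →₀ ℕ), I = Ideal.span ((fun c => (monomial c (1 : K))) '' A)

/-- The exponent vectors of the minimal monomial generators of a monomial ideal:
the exponent vectors of monomials of `I` that are minimal under divisibility. -/
def MinGens (K : Type) [Field K] {m : ℕ} (I : Ideal (MvPolynomial (Fin m) K)) :
    Set (Fin m →₀ ℕ) :=
  {c | (monomial c (1 : K)) ∈ I ∧ ∀ c' : Fin m →₀ ℕ, c' ≤ c → c' ≠ c →
      (monomial c' (1 : K)) ∉ I}

/-- The polarization `v^℘ = ∏_{i=1}^n ∏_{j=1}^{c_i} x_{i,j}` of the monomial `v = x^c`. -/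
def polMon (K : Type) [Field K] {m : ℕ} (b : Fin m → ℕ) (c : Fin m →₀ ℕ) :
    MvPolynomial (PolVars m b) K :=
  ∏ v ∈ Finset.univ.filter (fun v : PolVars m b => (v.2 : ℕ) < c v.1), X v

/-- The polarization `I^℘ ⊆ S^℘` of the monomial ideal `I`, generated by the
polarizations of the minimal monomial generators of `I`. -/
def polarIdeal (K : Type) [Field K] {m : ℕ} (b : Fin m → ℕ)
    (I : Ideal (MvPolynomial (Fin m) K)) : Ideal (MvPolynomial (PolVars m b) K) :=
  Ideal.span (polMon K b '' MinGens K I)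

/-- The squarefree monomial `x_{1,a_1+1} ⋯ x_{n,a_n+1} ∈ S^℘` associated with the
exponent vector `a` of a monomial `x^a ∈ Mon(S∖I)`. -/
def genL (K : Type) [Field K] {m : ℕ} (b : Fin m → ℕ) (a : Fin m →₀ ℕ) :
    MvPolynomial (PolVars m b) K :=
  ∏ v ∈ Finset.univ.filter (fun v : PolVars m b => (v.2 : ℕ) = a v.1), X v

/-- The ideal `L(I) ⊆ S^℘`, generated by the monomials `x_{1,a_1+1} ⋯ x_{n,a_n+1}`
with `x^a ∈ Mon(S∖I)`. -/
def LIdeal (K : Type) [Field K] {m : ℕ} (b : Fin m → ℕ)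
    (I : Ideal (MvPolynomial (Fin m) K)) : Ideal (MvPolynomial (PolVars m b) K) :=
  Ideal.span (genL K b '' {a | (monomial a (1 : K)) ∉ I})

/-- The monomial prime ideal `φ(x^a) = (x_{1,a_1+1}, …, x_{n,a_n+1}) ⊆ S^℘`. -/
def phiIdeal (K : Type) [Field K] {m : ℕ} (b : Fin m → ℕ) (a : Fin m →₀ ℕ) :
    Ideal (MvPolynomial (PolVars m b) K) :=
  Ideal.span ((fun v => (X v : MvPolynomial (PolVars m b) K)) ''
    {v : PolVars m b | (v.2 : ℕ) = a v.1})

/-- The set of faces of the simplicial complex `Δ(I)` on the vertex set `𝒮`, whose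
Stanley–Reisner ideal is `I^℘`: a finite set `F` of vertices is a face iff the
squarefree monomial `∏_{v ∈ F} v` does not belong to `I^℘`. -/
def facesDelta (K : Type) [Field K] {m : ℕ} (b : Fin m → ℕ)
    (I : Ideal (MvPolynomial (Fin m) K)) : Set (Finset (PolVars m b)) :=
  {F | (∏ v ∈ F, (X v : MvPolynomial (PolVars m b) K)) ∉ polarIdeal K b I}

/-- `F` is a facet (maximal face) of the simplicial complex (set of faces) `Δ`. -/
def IsFacetOf {V : Type} (Δ : Set (Finset V)) (F : Finset V) : Prop :=
  F ∈ Δ ∧ ∀ G ∈ Δ, F ⊆ G → F = G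

/-- Zero-dimensionality data for a monomial ideal: `I` is a proper monomial ideal and,
for each `i`, `b i ≥ 1` is the smallest positive integer with `x_i^{b i} ∈ I`
(equivalently, `dim S/I = 0` with the `b i` minimal). -/
def ZeroDimData (K : Type) [Field K] {m : ℕ} (b : Fin m → ℕ)
    (I : Ideal (MvPolynomial (Fin m) K)) : Prop :=
  IsMonomialIdeal I ∧ I ≠ ⊤ ∧ ∀ i : Fin m, 1 ≤ b i ∧
    (monomial (Finsupp.single i (b i)) (1 : K)) ∈ I ∧
    ∀ j : ℕ, j < b i → (monomial (Finsupp.single i j) (1 : K)) ∉ I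

/-- The deletion `del_Δ(v) = {G ∈ Δ : v ∉ G}`. -/
def delC {V : Type} (Δ : Set (Finset V)) (v : V) : Set (Finset V) :=
  {G ∈ Δ | v ∉ G}

/-- The link `link_Δ(v) = {G ∈ Δ : v ∉ G and G ∪ {v} ∈ Δ}`. -/
def linkC {V : Type} [DecidableEq V] (Δ : Set (Finset V)) (v : V) : Set (Finset V) :=
  {G ∈ Δ | v ∉ G ∧ insert v G ∈ Δ}

/-- Vertex decomposability of a simplicial complex (given as its set of faces):
`Δ` is vertex decomposable if it is a simplex, or it contains a vertex `v` such that
(i) every facet of `del_Δ(v)` is a facet of `Δ` (`v` is a shedding vertex), and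
(ii) both `del_Δ(v)` and `link_Δ(v)` are vertex decomposable. -/
inductive IsVertexDecomposable {V : Type} [DecidableEq V] : Set (Finset V) → Prop
  | simplex (F : Finset V) : IsVertexDecomposable {G | G ⊆ F}
  | shed (Δ : Set (Finset V)) (v : V) (hv : {v} ∈ Δ)
      (hshed : ∀ F : Finset V, IsFacetOf (delC Δ v) F → IsFacetOf Δ F)
      (hdel : IsVertexDecomposable (delC Δ v))
      (hlink : IsVertexDecomposable (linkC Δ v)) : IsVertexDecomposable Δ

/-- The vertex map replacing `x_{i₀,j}` by `x_{i₀,j-1}` and fixing all other vertices. -/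
def shiftDown {m : ℕ} {b : Fin m → ℕ} (i₀ : Fin m) (v : PolVars m b) : PolVars m b :=
  ⟨v.1, ⟨(v.2 : ℕ) - (if v.1 = i₀ then 1 else 0),
    Nat.lt_of_le_of_lt (Nat.sub_le _ _) v.2.isLt⟩⟩

/-- `set(u)` for a generator `u = genL a` of `L(I)` with respect to the order `r`:
the set of variables `x` of `S^℘` such that `x·u` lies in the ideal generated by the
generators of `L(I)` preceding `u`. -/
def setOfGen (K : Type) [Field K] {m : ℕ} (b : Fin m → ℕ)
    (I : Ideal (MvPolynomial (Fin m) K))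
    (r : (Fin m →₀ ℕ) → (Fin m →₀ ℕ) → Prop) (a : Fin m →₀ ℕ) : Set (PolVars m b) :=
  {v | ∃ a' : Fin m →₀ ℕ, (monomial a' (1 : K)) ∉ I ∧ r a' a ∧ a' ≠ a ∧
      genL K b a' ∣ X v * genL K b a}

/-- `J(u,i)`: the weakly increasing sequence of the second indices of the variables
`x_{i,·}` dividing the monomial with exponent vector `e` (counted with multiplicity). -/
def rowList {m : ℕ} {b : Fin m → ℕ} (e : PolVars m b →₀ ℕ) (i : Fin m) : List ℕ :=
  Multiset.sort (∑ j : Fin (b i), Multiset.replicate (e ⟨i, j⟩) (j : ℕ)) (· ≤ ·)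

/-- Lexicographic (weak) order on sequences of natural numbers. -/
def lexLE (l l' : List ℕ) : Prop := l = l' ∨ List.Lex (· < ·) l l'

/-- The exponent vectors of the (minimal) monomial generators of `L(I)^k`:
products of `k` generators of `L(I)`. -/
def GLkE (K : Type) [Field K] {m : ℕ} (b : Fin m → ℕ)
    (I : Ideal (MvPolynomial (Fin m) K)) (k : ℕ) : Set (PolVars m b →₀ ℕ) :=
  {e | ∃ f : Fin k → (Fin m →₀ ℕ), (∀ j, (monomial (f j) (1 : K)) ∉ I) ∧
      (monomial e (1 : K) : MvPolynomial (PolVars m b) K) = ∏ j, genL K b (f j)}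

/-- The depth of a module `M` with respect to the ideal `J`: the maximal length of an
`M`-regular sequence consisting of elements of `J`. -/
def myDepth (R : Type) [CommRing R] (J : Ideal R) (M : Type) [AddCommGroup M]
    [Module R M] : ℕ :=
  sSup {k : ℕ | ∃ rs : List R, rs.length = k ∧ (∀ r ∈ rs, r ∈ J) ∧
      RingTheory.Sequence.IsRegular M rs}

/-- `max{deg lcm(u_1, …, u_k) : u_1, …, u_k ∈ Mon(S∖I)}`; the degree of the lcm of the
monomials `x^{f 1}, …, x^{f k}` is `∑_i max_j (f j) i`. -/
def maxLcmDeg (K : Type) [Field K] {m : ℕ} (I : Ideal (MvPolynomial (Fin m) K))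
    (k : ℕ) : ℕ :=
  sSup {d : ℕ | ∃ f : Fin k → (Fin m →₀ ℕ), (∀ j, (monomial (f j) (1 : K)) ∉ I) ∧
      d = ∑ i : Fin m, Finset.univ.sup (fun j => (f j) i)}

/-!
A set `F` of vertices is a face of `Δ(I)` iff it misses, in every row `i`, some vertex
`x_{i,j}`: taking the least such `j` in each row gives an exponent vector `a` with `x^a ∉ I`.
So the facets of `Δ(I)` are the complements of the transversals `{x_{i,a_i+1}}` of the standard
monomials `x^a`.

More generally, let `A` be a set of tuples with least element `g` that is closed under going
down towards `g`, and take the complex whose facets are `{⟨i, j⟩ | g i ≤ j ≠ a i}` for `a ∈ A`.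
If `A = {g}` it is a simplex. Otherwise some `a ∈ A` exceeds `g` in a coordinate `i`, and
`⟨i, g i⟩` is a shedding vertex: its deletion is the complex of `{a ∈ A | a i = g i}` (with the
same `g`), and its link is the complex of `{a ∈ A | g i < a i}` with `g i` raised by one. Both
index sets are smaller than `A`, so induction on `A` applies.
-/

section LowerSetAbove

variable {ι : Type} {α : ι → Type} [∀ i, LinearOrder (α i)] {A : Finset (∀ i, α i)}
  {g : ∀ i, α i}

lemma isLeast_filter_apply_eq (hg : IsLeast (A : Set (∀ i, α i)) g) (i₀ : ι) :
    IsLeast (A.filter (· i₀ = g i₀) : Set (∀ i, α i)) g :=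
  ⟨Finset.mem_filter.2 ⟨hg.1, rfl⟩, fun _ ha => hg.2 (Finset.mem_filter.1 ha).1⟩

lemma Icc_subset_filter_apply_eq (hA : ∀ a ∈ A, Set.Icc g a ⊆ A) (i₀ : ι) :
    ∀ a ∈ A.filter (· i₀ = g i₀), Set.Icc g a ⊆ A.filter (· i₀ = g i₀) := by
  intro a ha a' ha'
  obtain ⟨ha, hai⟩ := Finset.mem_filter.1 ha
  exact Finset.mem_filter.2 ⟨hA a ha ha', le_antisymm (hai ▸ ha'.2 i₀) (ha'.1 i₀)⟩

variable [DecidableEq ι] [∀ i, SuccOrder (α i)]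

lemma isLeast_filter_lt_apply (hg : IsLeast (A : Set (∀ i, α i)) g)
    (hA : ∀ a ∈ A, Set.Icc g a ⊆ A) {a₀ : ∀ i, α i} (ha₀ : a₀ ∈ A) {i₀ : ι}
    (hi₀ : g i₀ < a₀ i₀) :
    IsLeast (A.filter (g i₀ < · i₀) : Set (∀ i, α i))
      (Function.update g i₀ (Order.succ (g i₀))) := by
  have hle : ∀ a ∈ A, g i₀ < a i₀ → Function.update g i₀ (Order.succ (g i₀)) ≤ a :=
    fun a ha hlt => update_le_iff.2 ⟨Order.succ_le_of_lt hlt, fun j _ => hg.2 ha j⟩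
  refine ⟨Finset.mem_filter.2 ⟨hA a₀ ha₀ ⟨?_, hle a₀ ha₀ hi₀⟩, ?_⟩, fun a ha => ?_⟩
  · exact le_update_iff.2 ⟨Order.le_succ _, fun _ _ => le_rfl⟩
  · simpa using Order.lt_succ_of_not_isMax (not_isMax_of_lt hi₀)
  · obtain ⟨ha, hlt⟩ := Finset.mem_filter.1 ha
    exact hle a ha hlt

lemma Icc_subset_filter_lt_apply (hA : ∀ a ∈ A, Set.Icc g a ⊆ A) (i₀ : ι) :
    ∀ a ∈ A.filter (g i₀ < · i₀),
      Set.Icc (Function.update g i₀ (Order.succ (g i₀))) a ⊆ A.filter (g i₀ < · i₀) := by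
  intro a ha a' ⟨hga', ha'a⟩
  obtain ⟨ha, hlt⟩ := Finset.mem_filter.1 ha
  obtain ⟨hi₀, hg⟩ := update_le_iff.1 hga'
  have hgg' : g ≤ a' := fun j => by
    by_cases h : j = i₀
    · exact h ▸ (Order.le_succ _).trans hi₀
    · exact hg j h
  exact Finset.mem_filter.2 ⟨hA a ha ⟨hgg', ha'a⟩,
    (Order.lt_succ_of_not_isMax (not_isMax_of_lt hlt)).trans_le hi₀⟩

end LowerSetAbove

section TupleComplex

variable {ι : Type} [Fintype ι] {α : ι → Type} [∀ i, Fintype (α i)]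
  [∀ i, LinearOrder (α i)]

def tupleFacet (g a : ∀ i, α i) : Finset (Σ i, α i) :=
  Finset.univ.filter fun v => g v.1 ≤ v.2 ∧ v.2 ≠ a v.1

def tupleComplex (A : Finset (∀ i, α i)) (g : ∀ i, α i) : Set (Finset (Σ i, α i)) :=
  {F | ∃ a ∈ A, F ⊆ tupleFacet g a}

variable {A : Finset (∀ i, α i)} {g : ∀ i, α i}

@[simp]
lemma mem_tupleFacet {a : ∀ i, α i} {v : Σ i, α i} :
    v ∈ tupleFacet g a ↔ g v.1 ≤ v.2 ∧ v.2 ≠ a v.1 := by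
  simp [tupleFacet]

lemma exists_eq_tupleFacet_of_isFacetOf {F : Finset (Σ i, α i)}
    (hF : IsFacetOf (tupleComplex A g) F) : ∃ a ∈ A, F = tupleFacet g a := by
  obtain ⟨⟨a, ha, hFa⟩, hmax⟩ := hF
  exact ⟨a, ha, hmax _ ⟨a, ha, subset_rfl⟩ hFa⟩

lemma subset_tupleFacet_iff_of_isBot (hg : ∀ i, IsBot (g i)) {F : Finset (Σ i, α i)}
    {a : ∀ i, α i} : F ⊆ tupleFacet g a ↔ ∀ i, ⟨i, a i⟩ ∉ F := by
  refine ⟨fun h i hi => (mem_tupleFacet.1 (h hi)).2 rfl, fun h ⟨i, j⟩ hv => ?_⟩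
  refine mem_tupleFacet.2 ⟨hg i j, ?_⟩
  intro (hj : j = a i)
  subst hj
  exact h i hv

lemma eq_of_tupleFacet_subset {a a' : ∀ i, α i} (ha' : g ≤ a')
    (h : tupleFacet g a ⊆ tupleFacet g a') : a = a' := by
  funext i
  by_contra hne
  have hmem : (⟨i, a' i⟩ : Σ i, α i) ∈ tupleFacet g a := mem_tupleFacet.2 ⟨ha' i, Ne.symm hne⟩
  exact (mem_tupleFacet.1 (h hmem)).2 rfl

lemma isFacetOf_tupleComplex (hg : g ∈ lowerBounds (A : Set (∀ i, α i))) {a : ∀ i, α i}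
    (ha : a ∈ A) : IsFacetOf (tupleComplex A g) (tupleFacet g a) := by
  refine ⟨⟨a, ha, subset_rfl⟩, ?_⟩
  rintro G ⟨a', ha', hG⟩ hsub
  obtain rfl := eq_of_tupleFacet_subset (hg ha') (hsub.trans hG)
  exact hsub.antisymm hG

lemma IsFacetOf.tupleComplex_mono {A₀ : Finset (∀ i, α i)} {F : Finset (Σ i, α i)}
    (hF : IsFacetOf (tupleComplex A₀ g) F) (hA : A₀ ⊆ A)
    (hg : g ∈ lowerBounds (A : Set (∀ i, α i))) : IsFacetOf (tupleComplex A g) F := by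
  obtain ⟨a, ha, rfl⟩ := exists_eq_tupleFacet_of_isFacetOf hF
  exact isFacetOf_tupleComplex hg (hA ha)

variable [DecidableEq ι]

lemma delC_tupleComplex (hg : g ∈ lowerBounds (A : Set (∀ i, α i)))
    (hA : ∀ a ∈ A, Set.Icc g a ⊆ A) (i₀ : ι) :
    delC (tupleComplex A g) ⟨i₀, g i₀⟩ = tupleComplex (A.filter (· i₀ = g i₀)) g := by
  ext F
  constructor
  · rintro ⟨⟨a, ha, hFa⟩, hvF⟩
    have hmem : Function.update a i₀ (g i₀) ∈ A :=
      hA a ha ⟨le_update_iff.2 ⟨le_rfl, fun j _ => hg ha j⟩,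
        update_le_iff.2 ⟨hg ha i₀, fun j _ => le_rfl⟩⟩
    refine ⟨_, Finset.mem_filter.2 ⟨hmem, by simp⟩, fun v hv => ?_⟩
    obtain ⟨hgv, hva⟩ := mem_tupleFacet.1 (hFa hv)
    refine mem_tupleFacet.2 ⟨hgv, ?_⟩
    obtain ⟨i, j⟩ := v
    by_cases h : i = i₀
    · subst h
      simp only [Function.update_self]
      rintro rfl
      exact hvF hv
    · simpa [h] using hva
  · rintro ⟨a, ha, hFa⟩
    obtain ⟨ha, hai⟩ := Finset.mem_filter.1 ha
    exact ⟨⟨a, ha, hFa⟩, fun hv => (mem_tupleFacet.1 (hFa hv)).2 hai.symm⟩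

variable [∀ i, SuccOrder (α i)]

lemma linkC_tupleComplex (hg : g ∈ lowerBounds (A : Set (∀ i, α i))) (i₀ : ι) :
    linkC (tupleComplex A g) ⟨i₀, g i₀⟩ =
      tupleComplex (A.filter (g i₀ < · i₀)) (Function.update g i₀ (Order.succ (g i₀))) := by
  ext G
  constructor
  · rintro ⟨-, hvG, a, ha, hGa⟩
    have hva := (mem_tupleFacet.1 (hGa (Finset.mem_insert_self _ _))).2
    refine ⟨a, Finset.mem_filter.2 ⟨ha, (hg ha i₀).lt_of_ne hva⟩, fun w hw => ?_⟩
    obtain ⟨hgw, hwa⟩ := mem_tupleFacet.1 (hGa (Finset.mem_insert_of_mem hw))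
    refine mem_tupleFacet.2 ⟨?_, hwa⟩
    obtain ⟨i, j⟩ := w
    by_cases h : i = i₀
    · subst h
      have hne : g i ≠ j := by rintro rfl; exact hvG hw
      simpa using Order.succ_le_of_lt (hgw.lt_of_ne hne)
    · simpa [h] using hgw
  · rintro ⟨a, ha, hGa⟩
    obtain ⟨ha, hlt⟩ := Finset.mem_filter.1 ha
    have hgg' : g ≤ Function.update g i₀ (Order.succ (g i₀)) :=
      le_update_iff.2 ⟨Order.le_succ _, fun _ _ => le_rfl⟩
    have hG : G ⊆ tupleFacet g a := fun w hw =>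
      have hw' := mem_tupleFacet.1 (hGa hw)
      mem_tupleFacet.2 ⟨(hgg' w.1).trans hw'.1, hw'.2⟩
    have hvG : ⟨i₀, g i₀⟩ ∉ G := fun hv => by
      have hle := (mem_tupleFacet.1 (hGa hv)).1
      simp only [Function.update_self] at hle
      exact not_isMax_of_lt hlt (Order.succ_le_iff_isMax.1 hle)
    exact ⟨⟨a, ha, hG⟩, hvG, a, ha,
      Finset.insert_subset (mem_tupleFacet.2 ⟨le_rfl, hlt.ne⟩) hG⟩

theorem isVertexDecomposable_tupleComplex (A : Finset (∀ i, α i)) (g : ∀ i, α i)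
    (hg : IsLeast (A : Set (∀ i, α i)) g) (hA : ∀ a ∈ A, Set.Icc g a ⊆ A) :
    IsVertexDecomposable (tupleComplex A g) := by
  induction A using Finset.strongInduction generalizing g with
  | H A ih =>
  by_cases hAg : A = {g}
  · subst hAg
    simpa [tupleComplex] using IsVertexDecomposable.simplex (tupleFacet g g)
  obtain ⟨a₀, ha₀, ha₀g⟩ : ∃ a ∈ A, a ≠ g := by
    by_contra! h
    exact hAg (Finset.eq_singleton_iff_unique_mem.2 ⟨hg.1, h⟩)
  obtain ⟨i₀, hi₀⟩ : ∃ i, g i < a₀ i := (Pi.lt_def.1 ((hg.2 ha₀).lt_of_ne ha₀g.symm)).2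
  refine .shed _ ⟨i₀, g i₀⟩ ⟨a₀, ha₀, by simpa using hi₀.ne⟩ (fun F hF => ?_) ?_ ?_
  · rw [delC_tupleComplex hg.2 hA] at hF
    exact hF.tupleComplex_mono (Finset.filter_subset _ _) hg.2
  · rw [delC_tupleComplex hg.2 hA]
    exact ih (A.filter (· i₀ = g i₀)) (Finset.filter_ssubset.2 ⟨a₀, ha₀, hi₀.ne'⟩) g
      (isLeast_filter_apply_eq hg i₀) (Icc_subset_filter_apply_eq hA i₀)
  · rw [linkC_tupleComplex hg.2]
    exact ih (A.filter (g i₀ < · i₀)) (Finset.filter_ssubset.2 ⟨g, hg.1, lt_irrefl _⟩) _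
      (isLeast_filter_lt_apply hg hA ha₀ hi₀) (Icc_subset_filter_lt_apply hA i₀)

end TupleComplex

section Polarization

lemma prod_X_eq_monomial_sum_single {σ R : Type} [CommSemiring R] (F : Finset σ) :
    (∏ v ∈ F, X v : MvPolynomial σ R) = monomial (∑ v ∈ F, Finsupp.single v 1) 1 :=
  (monomial_sum_one F _).symm

lemma Finset.sum_single_one_le_iff {σ : Type} {S F : Finset σ} :
    ∑ v ∈ S, Finsupp.single v 1 ≤ ∑ v ∈ F, Finsupp.single v 1 ↔ S ⊆ F := by
  classical
  rw [← Finsupp.orderIsoMultiset.le_iff_le]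
  simp

variable {K : Type} [Field K] {n : ℕ} {b : Fin n → ℕ} {I : Ideal (MvPolynomial (Fin n) K)}

lemma monomial_mem_of_le {c a : Fin n →₀ ℕ} (hca : c ≤ a) (hc : monomial c (1 : K) ∈ I) :
    monomial a (1 : K) ∈ I :=
  I.mem_of_dvd (monomial_dvd_monomial.2 ⟨Or.inr hca, one_dvd _⟩) hc

lemma exists_mem_minGens_le {a : Fin n →₀ ℕ} (ha : monomial a (1 : K) ∈ I) :
    ∃ c ∈ MinGens K I, c ≤ a := by
  obtain ⟨c, ⟨hca, hc⟩, hmin⟩ :=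
    wellFounded_lt.has_min {c | c ≤ a ∧ monomial c (1 : K) ∈ I} ⟨a, le_rfl, ha⟩
  exact ⟨c, ⟨hc, fun c' hle hne hc' => hmin c' ⟨hle.trans hca, hc'⟩ (hle.lt_of_ne hne)⟩, hca⟩

lemma single_mem_minGens (hI : ZeroDimData K b I) (i : Fin n) :
    Finsupp.single i (b i) ∈ MinGens K I := by
  refine ⟨(hI.2.2 i).2.1, fun c hle hne => ?_⟩
  have hc : c = Finsupp.single i (c i) := by
    ext j
    by_cases h : j = i
    · simp [h]
    · simpa [Finsupp.single_apply, Ne.symm h] using hle j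
  have hci : c i < b i := (by simpa using hle i : c i ≤ b i).lt_of_ne fun h => hne (h ▸ hc)
  exact hc ▸ (hI.2.2 i).2.2 _ hci

lemma prod_X_mem_polarIdeal_iff (F : Finset (PolVars n b)) :
    (∏ v ∈ F, X v : MvPolynomial (PolVars n b) K) ∈ polarIdeal K b I ↔
      ∃ c ∈ MinGens K I, ∀ v : PolVars n b, (v.2 : ℕ) < c v.1 → v ∈ F := by
  classical
  have hpolMon : polMon K b = (fun e => monomial e (1 : K)) ∘ fun c =>
      ∑ v ∈ Finset.univ.filter (fun v : PolVars n b => (v.2 : ℕ) < c v.1), Finsupp.single v 1 := by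
    funext c
    exact prod_X_eq_monomial_sum_single _
  rw [polarIdeal, hpolMon, Set.image_comp, prod_X_eq_monomial_sum_single,
    mem_ideal_span_monomial_image, support_monomial, if_neg one_ne_zero]
  simp [Finset.sum_single_one_le_iff, Finset.subset_iff]

end Polarization

section StandardTuples

variable {K : Type} [Field K] {n : ℕ} {b : Fin n → ℕ} {I : Ideal (MvPolynomial (Fin n) K)}

def toExponent (a : ∀ i, Fin (b i)) : Fin n →₀ ℕ :=
  Finsupp.equivFunOnFinite.symm fun i => (a i : ℕ)

@[simp]
lemma toExponent_apply (a : ∀ i, Fin (b i)) (i : Fin n) : toExponent a i = a i := rfl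

open Classical in
variable (K b I) in
def standardTuples : Finset (∀ i, Fin (b i)) :=
  Finset.univ.filter fun a => monomial (toExponent a) (1 : K) ∉ I

lemma mem_standardTuples {a : ∀ i, Fin (b i)} :
    a ∈ standardTuples K b I ↔ monomial (toExponent a) (1 : K) ∉ I := by
  simp [standardTuples]

lemma mem_standardTuples_of_le {a a' : ∀ i, Fin (b i)} (h : a' ≤ a)
    (ha : a ∈ standardTuples K b I) : a' ∈ standardTuples K b I :=
  mem_standardTuples.2 fun ha' =>
    mem_standardTuples.1 ha (monomial_mem_of_le (fun i => by simpa using h i) ha')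

lemma exists_mem_standardTuples_of_mem_facesDelta (hI : ZeroDimData K b I)
    {F : Finset (PolVars n b)} (hF : F ∈ facesDelta K b I) :
    ∃ a ∈ standardTuples K b I, ∀ i, ⟨i, a i⟩ ∉ F := by
  replace hF := (prod_X_mem_polarIdeal_iff F).not.1 hF
  push Not at hF
  have hne : ∀ i,
      (Finset.univ.filter fun j : Fin (b i) => (⟨i, j⟩ : PolVars n b) ∉ F).Nonempty := by
    intro i
    obtain ⟨⟨i', j⟩, hj, hjF⟩ := hF _ (single_mem_minGens hI i)
    obtain rfl : i' = i := by
      by_contra h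
      simp [Ne.symm h] at hj
    exact ⟨j, by simpa using hjF⟩
  let a i := (Finset.univ.filter fun j : Fin (b i) => (⟨i, j⟩ : PolVars n b) ∉ F).min' (hne i)
  refine ⟨a, mem_standardTuples.2 fun ha => ?_,
    fun i => (Finset.mem_filter.1 (Finset.min'_mem _ (hne i))).2⟩
  obtain ⟨c, hc, hca⟩ := exists_mem_minGens_le ha
  obtain ⟨v, hv, hvF⟩ := hF c hc
  have hav : a v.1 ≤ v.2 := Finset.min'_le _ _ (by simpa using hvF)
  have hcv : c v.1 ≤ a v.1 := by simpa using hca v.1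
  exact absurd (hv.trans_le hcv) (not_lt.2 hav)

lemma mem_facesDelta_of_mem_standardTuples {F : Finset (PolVars n b)} {a : ∀ i, Fin (b i)}
    (ha : a ∈ standardTuples K b I) (haF : ∀ i, ⟨i, a i⟩ ∉ F) : F ∈ facesDelta K b I := by
  intro hF
  obtain ⟨c, hc, hcF⟩ := (prod_X_mem_polarIdeal_iff F).1 hF
  by_cases hca : c ≤ toExponent a
  · exact mem_standardTuples.1 ha (monomial_mem_of_le hca hc.1)
  · obtain ⟨i, hi⟩ : ∃ i, (a i : ℕ) < c i := by simpa [Finsupp.le_def] using hca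
    exact haF i (hcF _ hi)

theorem facesDelta_eq_tupleComplex (hI : ZeroDimData K b I) :
    facesDelta K b I = tupleComplex (standardTuples K b I) fun i => ⟨0, (hI.2.2 i).1⟩ := by
  have hbot : ∀ i, IsBot (⟨0, (hI.2.2 i).1⟩ : Fin (b i)) := fun i j => Nat.zero_le j
  ext F
  simp only [tupleComplex, Set.mem_ofPred_eq, subset_tupleFacet_iff_of_isBot hbot]
  exact ⟨exists_mem_standardTuples_of_mem_facesDelta hI,
    fun ⟨_, ha, haF⟩ => mem_facesDelta_of_mem_standardTuples ha haF⟩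

end StandardTuples

/-- The simplicial complex `Δ(I)` is vertex decomposable. -/
theorem statement10 {K : Type} [Field K] {n : ℕ} (b : Fin n → ℕ)
    (I : Ideal (MvPolynomial (Fin n) K)) (hI : ZeroDimData K b I) :
    IsVertexDecomposable (facesDelta K b I) := by
  rw [facesDelta_eq_tupleComplex hI]
  refine isVertexDecomposable_tupleComplex _ _ ⟨?_, fun a _ i => Nat.zero_le _⟩
    fun a ha a' ha' => mem_standardTuples_of_le ha'.2 ha
  have hzero : toExponent (fun i => (⟨0, (hI.2.2 i).1⟩ : Fin (b i))) = 0 := by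
    ext i
    rfl
  rw [Finset.mem_coe, mem_standardTuples, hzero, ← one_def, ← Ideal.eq_top_iff_one]
  exact hI.2.1
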